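/- arXiv:1801.08801 — 5 statements merged into one kernel-verified Lean document; each statement's English description precedes it below -/
import Mathlib

section
/- Let λ > 0 and α > 2, and define P(τ) = ∫₀^∞ exp( −πλ r²·( ₂F₁(−2/α, 1; 1 − 2/α; −τ) − 1 ) ) · 2πλ r·exp(−πλ r²) dr. Then P(τ) = 1 / ₂F₁(−2/α, 1; 1 − 2/α; −τ), and in particular P(τ) is independent of λ. -/
open MeasureTheory Real Set

/-- `hyp2F1 α b z` is the Gauss hypergeometric function `₂F₁(−2/α, b; 1 − 2/α; z)`
(for `α > 2`, `b > 0`, `z ≤ 0`), expressed through its integral representation. -/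
noncomputable def hyp2F1 (α b z : ℝ) : ℝ :=
  1 + 2 * ∫ u in Ioi (1 : ℝ), (1 - (1 - z * u ^ (-α)) ^ (-b)) * u

/-! Conditioning on the serving distance `r`, the interference factor `exp(−πλr²(F − 1))` merges
with the density `2πλr e^{−πλr²}` of the nearest base station into `2πλr e^{−πλF r²}`, whose
integral is `πλ / (πλF) = 1/F`. Here `F ≥ 1 > 0` because the integrand in the representation of
`₂F₁` is nonnegative at nonpositive arguments. -/

theorem one_le_hyp2F1 (α : ℝ) {b z : ℝ} (hb : 0 ≤ b) (hz : z ≤ 0) : 1 ≤ hyp2F1 α b z := by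
  suffices 0 ≤ ∫ u in Ioi (1 : ℝ), (1 - (1 - z * u ^ (-α)) ^ (-b)) * u by
    unfold hyp2F1; linarith
  refine setIntegral_nonneg measurableSet_Ioi fun u (hu : 1 < u) => ?_
  have hu₀ : 0 < u := one_pos.trans hu
  have hbase : 1 ≤ 1 - z * u ^ (-α) := by
    nlinarith [mul_nonpos_of_nonpos_of_nonneg hz (rpow_nonneg hu₀.le (-α))]
  have hpow : (1 - z * u ^ (-α)) ^ (-b) ≤ 1 :=
    rpow_le_one_of_one_le_of_nonpos hbase (neg_nonpos.mpr hb)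
  exact mul_nonneg (sub_nonneg.mpr hpow) hu₀.le

theorem integral_Ioi_mul_exp_neg_mul_sq {b : ℝ} (hb : 0 < b) :
    ∫ r in Ioi (0 : ℝ), r * exp (-b * r ^ 2) = (2 * b)⁻¹ := by
  have h := integral_mul_cexp_neg_mul_sq (b := (b : ℂ)) (by simpa using hb)
  rw [← Complex.ofReal_inj, ← integral_complex_ofReal]
  push_cast
  exact h

theorem coverage_probability_rayleigh_general (l α τ : ℝ) (hl : 0 < l) (hτ : 0 ≤ τ) :
    ∫ r in Ioi (0 : ℝ),
        Real.exp (-π * l * r ^ 2 * (hyp2F1 α 1 (-τ) - 1)) *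
          (2 * π * l * r * Real.exp (-π * l * r ^ 2)) =
      1 / hyp2F1 α 1 (-τ) := by
  set F := hyp2F1 α 1 (-τ)
  have hF : 0 < F := one_pos.trans_le (one_le_hyp2F1 α zero_le_one (neg_nonpos.mpr hτ))
  calc ∫ r in Ioi (0 : ℝ), exp (-π * l * r ^ 2 * (F - 1)) * (2 * π * l * r * exp (-π * l * r ^ 2))
      _ = ∫ r in Ioi (0 : ℝ), 2 * π * l * (r * exp (-(π * l * F) * r ^ 2)) := by
        refine setIntegral_congr_fun measurableSet_Ioi fun r _ => ?_
        have hexp : exp (-π * l * r ^ 2 * (F - 1)) * exp (-π * l * r ^ 2)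
            = exp (-(π * l * F) * r ^ 2) := by
          rw [← exp_add]; ring_nf
        linear_combination (2 * π * l * r) * hexp
      _ = 2 * π * l * (2 * (π * l * F))⁻¹ := by
        rw [integral_const_mul, integral_Ioi_mul_exp_neg_mul_sq (by positivity)]
      _ = 1 / F := by field_simp

/-- SIR coverage probability of a Poisson network with Rayleigh fading and nearest-BS
association (Lemma 3): with
`P(τ) = ∫₀^∞ exp(−πλ r² (₂F₁(−2/α,1;1−2/α;−τ) − 1)) · 2πλ r e^(−πλ r²) dr`,
one has `P(τ) = 1 / ₂F₁(−2/α,1;1−2/α;−τ)`; in particular `P(τ)` does not depend on `λ`. -/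
theorem coverage_probability_rayleigh (l α τ : ℝ) (hl : 0 < l) (hα : 2 < α) (hτ : 0 ≤ τ) :
    ∫ r in Ioi (0 : ℝ),
        Real.exp (-π * l * r ^ 2 * (hyp2F1 α 1 (-τ) - 1)) *
          (2 * π * l * r * Real.exp (-π * l * r ^ 2)) =
      1 / hyp2F1 α 1 (-τ) :=
  coverage_probability_rayleigh_general l α τ hl hτ
end

section
/- Fix positive constants λ₁, λ₂, a₁, a₂ with a_j = p_j λ_j P̂_j^{2/α_j}. Then f(r) = 2π p₁ λ₁ r · exp( −π Σ_{j=1}^{2} p_j λ_j P̂_j^{2/α_j} r^{2/α̂_j} ) with α̂_j = α_j/α_i integrates over r ∈ [0,∞) to the association probability A = P[ nearest tier-1 biased power exceeds tier-2 ]; in the special case α₁ = α₂ (so α̂_j = 1), ∫₀^∞ f(r) dr = p₁λ₁ P̂₁^{2/α} / ( p₁λ₁ P̂₁^{2/α} + p₂λ₂ P̂₂^{2/α} ). -/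
open MeasureTheory Real Set

theorem integral_Ioi_const_mul_mul_exp_neg_mul_sq (a : ℝ) {b : ℝ} (hb : 0 < b) :
    ∫ r in Ioi (0 : ℝ), a * r * exp (-b * r ^ 2) = a / (2 * b) := by
  simp_rw [mul_assoc a, integral_const_mul, integral_Ioi_mul_exp_neg_mul_sq hb, div_eq_mul_inv]

theorem association_probability_equal_exponents_general
    (p₁ p₂ l₁ l₂ α Phat₁ Phat₂ : ℝ)
    (hp₁ : 0 < p₁) (hp₂ : 0 < p₂) (hl₁ : 0 < l₁) (hl₂ : 0 < l₂)
    (hP₁ : Phat₁ = 1) (hP₂ : 0 < Phat₂) :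
    ∫ r in Ioi (0 : ℝ),
        2 * π * p₁ * l₁ * r *
          Real.exp (-π * (p₁ * l₁ * Phat₁ ^ (2 / α) + p₂ * l₂ * Phat₂ ^ (2 / α)) * r ^ 2) =
      p₁ * l₁ * Phat₁ ^ (2 / α) /
        (p₁ * l₁ * Phat₁ ^ (2 / α) + p₂ * l₂ * Phat₂ ^ (2 / α)) := by
  subst hP₁
  rw [one_rpow, mul_one]
  set c := p₁ * l₁ + p₂ * l₂ * Phat₂ ^ (2 / α)
  have hc : 0 < c := by have := rpow_pos_of_pos hP₂ (2 / α); positivity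
  rw [neg_mul π c, integral_Ioi_const_mul_mul_exp_neg_mul_sq _ (by positivity)]
  field_simp

/-- Max-biased-received-power association probability (equal path-loss exponents).
With two PPP tiers of effective densities `p_j λ_j`, power bias factors `P̂_j` (and `P̂₁ = 1`
for the serving tier), equal path loss exponents `α₁ = α₂ = α` (so `α̂_j = 1`), the serving
distance PDF `f(r) = 2π p₁ λ₁ r exp(−π Σ_j p_j λ_j P̂_j^(2/α) r²)` integrates over
`[0,∞)` to `p₁λ₁ P̂₁^(2/α) / (p₁λ₁ P̂₁^(2/α) + p₂λ₂ P̂₂^(2/α))`. -/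
theorem association_probability_equal_exponents
    (p₁ p₂ l₁ l₂ α Phat₁ Phat₂ : ℝ)
    (hp₁ : 0 < p₁) (hp₂ : 0 < p₂) (hl₁ : 0 < l₁) (hl₂ : 0 < l₂) (hα : 0 < α)
    (hP₁ : Phat₁ = 1) (hP₂ : 0 < Phat₂) :
    ∫ r in Ioi (0 : ℝ),
        2 * π * p₁ * l₁ * r *
          Real.exp (-π * (p₁ * l₁ * Phat₁ ^ (2 / α) + p₂ * l₂ * Phat₂ ^ (2 / α)) * r ^ 2) =
      p₁ * l₁ * Phat₁ ^ (2 / α) /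
        (p₁ * l₁ * Phat₁ ^ (2 / α) + p₂ * l₂ * Phat₂ ^ (2 / α)) :=
  association_probability_equal_exponents_general p₁ p₂ l₁ l₂ α Phat₁ Phat₂ hp₁ hp₂ hl₁ hl₂ hP₁ hP₂
end

section
/- (Alzer's inequality) For X ~ Gamma(N, N), a normalized Gamma random variable with integer shape N ≥ 1 and mean 1, and any t > 0, one has P[X ≤ t] ≥ (1 − e^{−η t})^N, where η = N·(N!)^{−1/N}. -/
open MeasureTheory Real ProbabilityTheory

lemma alzer_key {u : ℝ} (hu : 0 < u) : u^2 * Real.exp u < (Real.exp u - 1)^2 := by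
  have h1 : u / 2 < Real.sinh (u / 2) := (Real.self_lt_sinh_iff.mpr (by linarith))
  rw [Real.sinh_eq] at h1
  have hev : 0 < Real.exp (u/2) := Real.exp_pos _
  have h3 : u * Real.exp (u/2) < (Real.exp (u/2) - Real.exp (-(u/2))) * Real.exp (u/2) :=
    mul_lt_mul_of_pos_right (by linarith) hev
  have hee : Real.exp (u/2) * Real.exp (u/2) = Real.exp u := by
    rw [← Real.exp_add]; ring_nf
  have h5 : Real.exp (-(u/2)) * Real.exp (u/2) = 1 := by
    rw [← Real.exp_add]; simp
  have h4 : (Real.exp (u/2) - Real.exp (-(u/2))) * Real.exp (u/2) = Real.exp u - 1 := by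
    rw [sub_mul, hee, h5]
  rw [h4] at h3
  have hpos : 0 < u * Real.exp (u/2) := by positivity
  calc u^2 * Real.exp u = (u * Real.exp (u/2))^2 := by rw [mul_pow]; rw [sq (Real.exp (u/2)), hee]
    _ < (Real.exp u - 1)^2 := by nlinarith

lemma alzer_exp_sub_one_pos {u : ℝ} (hu : 0 < u) : 0 < Real.exp u - 1 := by
  have := Real.one_lt_exp_iff.mpr hu; linarith

lemma alzer_phi_hasDeriv {u : ℝ} (hu : 0 < u) :
    HasDerivAt (fun u : ℝ => 1/u - 1/(Real.exp u - 1))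
      (-(u^2)⁻¹ + Real.exp u / (Real.exp u - 1)^2) u := by
  have he := alzer_exp_sub_one_pos hu
  have h1 : HasDerivAt (fun u : ℝ => 1/u) (-(u^2)⁻¹) u := by
    simpa [one_div] using hasDerivAt_inv hu.ne'
  have h2 : HasDerivAt (fun u : ℝ => Real.exp u - 1) (Real.exp u) u :=
    (Real.hasDerivAt_exp u).sub_const 1
  have h3 : HasDerivAt (fun u : ℝ => 1/(Real.exp u - 1))
      (-(Real.exp u) / (Real.exp u - 1)^2) u := by
    simpa [one_div] using h2.fun_inv he.ne'
  simpa [sub_eq_add_neg, neg_div] using h1.fun_sub h3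

lemma alzer_phi_anti : StrictAntiOn (fun u : ℝ => 1/u - 1/(Real.exp u - 1)) (Set.Ioi 0) := by
  have hint : interior (Set.Ioi (0:ℝ)) = Set.Ioi 0 := interior_Ioi
  apply strictAntiOn_of_deriv_neg (convex_Ioi 0)
  · intro u hu
    exact (alzer_phi_hasDeriv hu).continuousAt.continuousWithinAt
  · intro u hu
    rw [hint] at hu
    have hu : (0:ℝ) < u := hu
    rw [(alzer_phi_hasDeriv hu).deriv]
    have he := alzer_exp_sub_one_pos hu
    have hkey := alzer_key hu
    have h1 : Real.exp u / (Real.exp u - 1)^2 < (u^2)⁻¹ := by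
      rw [div_lt_iff₀ (by positivity), inv_mul_eq_div, lt_div_iff₀ (by positivity)]
      nlinarith
    linarith

noncomputable def alzerG (n : ℕ) (η t : ℝ) : ℝ :=
  ((n:ℝ)-1) * (Real.log ((n:ℝ)*t) - Real.log (1 - Real.exp (-η*t)))
    - ((n:ℝ)-η)*t - Real.log ((n-1).factorial * η)

noncomputable def alzerG' (n : ℕ) (η t : ℝ) : ℝ :=
  ((n:ℝ)-1) * (1/t - η/(Real.exp (η*t) - 1)) - ((n:ℝ)-η)

lemma alzerG_hasDeriv (n : ℕ) (hn : 1 ≤ n) {η : ℝ} (hη : 0 < η) {t : ℝ} (ht : 0 < t) :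
    HasDerivAt (alzerG n η) (alzerG' n η t) t := by
  have hnp : (0:ℝ) < n := by exact_mod_cast hn
  have hex : Real.exp (-η*t) < 1 := by
    rw [Real.exp_lt_one_iff]; nlinarith
  have h1 : HasDerivAt (fun t : ℝ => Real.log ((n:ℝ)*t)) (1/t) t := by
    have h := ((hasDerivAt_id' t).const_mul (n:ℝ)).log (by positivity)
    convert h using 1
    field_simp
  have hinner : HasDerivAt (fun t : ℝ => 1 - Real.exp (-η*t)) (η * Real.exp (-η*t)) t := by
    have h := ((hasDerivAt_id t).const_mul (-η)).exp
    have h2 := (h.const_sub 1)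
    simpa [neg_mul, mul_comm] using h2
  have h2 : HasDerivAt (fun t : ℝ => Real.log (1 - Real.exp (-η*t)))
      (η * Real.exp (-η*t) / (1 - Real.exp (-η*t))) t :=
    hinner.log (by linarith)
  have heq : η * Real.exp (-η*t) / (1 - Real.exp (-η*t)) = η/(Real.exp (η*t) - 1) := by
    rw [div_eq_div_iff (by linarith) (by have := alzer_exp_sub_one_pos (by positivity : 0 < η*t); linarith)]
    have h5 : Real.exp (-η*t) * Real.exp (η*t) = 1 := by
      rw [← Real.exp_add]; ring_nf; exact Real.exp_zero
    linear_combination η * h5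
  rw [heq] at h2
  have h3 : HasDerivAt (fun t : ℝ => ((n:ℝ)-1) * (Real.log ((n:ℝ)*t) - Real.log (1 - Real.exp (-η*t))))
      (((n:ℝ)-1) * (1/t - η/(Real.exp (η*t) - 1))) t := (h1.sub h2).const_mul _
  have h4 : HasDerivAt (fun t : ℝ => ((n:ℝ)-η)*t) ((n:ℝ)-η) t := by
    simpa using (hasDerivAt_id t).const_mul ((n:ℝ)-η)
  exact (h3.sub h4).sub_const (Real.log ((n-1).factorial * η))

lemma alzerG'_anti (n : ℕ) (hn : 1 ≤ n) {η : ℝ} (hη : 0 < η) :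
    AntitoneOn (alzerG' n η) (Set.Ioi 0) := by
  intro s hs t ht hst
  have hs : (0:ℝ) < s := hs
  have ht : (0:ℝ) < t := ht
  rcases eq_or_lt_of_le hst with rfl | hst
  · exact le_refl _
  · have hphi := alzer_phi_anti (Set.mem_Ioi.mpr (by positivity : (0:ℝ) < η*s))
      (Set.mem_Ioi.mpr (by positivity : (0:ℝ) < η*t)) (by nlinarith)
    have hfac : ∀ u : ℝ, 0 < u → 1/u - η/(Real.exp (η*u) - 1)
        = η * (1/(η*u) - 1/(Real.exp (η*u) - 1)) := by
      intro u hu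
      have := alzer_exp_sub_one_pos (by positivity : (0:ℝ) < η*u)
      field_simp
    unfold alzerG'
    have hn1 : (0:ℝ) ≤ (n:ℝ)-1 := by
      have : (1:ℝ) ≤ (n:ℝ) := by exact_mod_cast hn
      linarith
    have := mul_le_mul_of_nonneg_left (mul_le_mul_of_nonneg_left hphi.le hη.le) hn1
    rw [hfac s hs, hfac t ht]
    simp only [] at this ⊢
    linarith

lemma alzerG_concave (n : ℕ) (hn : 1 ≤ n) {η : ℝ} (hη : 0 < η) :
    ConcaveOn ℝ (Set.Ioi 0) (alzerG n η) := by
  have hd : ∀ t ∈ Set.Ioi (0:ℝ), HasDerivAt (alzerG n η) (alzerG' n η t) t :=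
    fun t ht => alzerG_hasDeriv n hn hη ht
  apply AntitoneOn.concaveOn_of_deriv (convex_Ioi 0)
  · exact fun t ht => (hd t ht).continuousAt.continuousWithinAt
  · rw [interior_Ioi]
    exact fun t ht => (hd t ht).differentiableAt.differentiableWithinAt
  · rw [interior_Ioi]
    intro s hs t ht hst
    rw [(hd s hs).deriv, (hd t ht).deriv]
    exact alzerG'_anti n hn hη hs ht hst

open Filter Topology in
lemma alzerG_tendsto_zero (n : ℕ) (hn : 1 ≤ n) {η : ℝ} (hη : 0 < η)
    (hzero : ((n:ℝ)-1) * Real.log ((n:ℝ)/η) - Real.log ((n-1).factorial * η) = 0) :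
    Tendsto (alzerG n η) (nhdsWithin 0 (Set.Ioi 0)) (nhds 0) := by
  have hnp : (0:ℝ) < n := by exact_mod_cast hn
  -- the slope of t ↦ 1 - exp(-ηt) at 0 tends to η
  have hd0 : HasDerivAt (fun t : ℝ => 1 - Real.exp (-η*t)) η 0 := by
    have h := ((hasDerivAt_id' (0:ℝ)).const_mul (-η)).exp
    have h2 := h.const_sub 1
    exact h2.congr_deriv (by norm_num)
  have hslope : Tendsto (fun t : ℝ => (1 - Real.exp (-η*t))/t) (nhdsWithin 0 (Set.Ioi 0)) (nhds η) := by
    have h := hasDerivAt_iff_tendsto_slope.mp hd0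
    have hsub : Set.Ioi (0:ℝ) ⊆ {(0:ℝ)}ᶜ := fun x hx =>
      Set.mem_compl_singleton_iff.mpr (ne_of_gt hx)
    have h2 : Tendsto (slope (fun t : ℝ => 1 - Real.exp (-η*t)) 0)
        (nhdsWithin 0 (Set.Ioi 0)) (nhds η) :=
      h.mono_left (nhdsWithin_mono 0 hsub)
    refine h2.congr (fun t => ?_)
    simp [slope_def_field, neg_mul]
  have hq : Tendsto (fun t : ℝ => (n:ℝ)*t/(1 - Real.exp (-η*t)))
      (nhdsWithin 0 (Set.Ioi 0)) (nhds ((n:ℝ)/η)) := by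
    have hinv := hslope.inv₀ hη.ne'
    have h5 : Tendsto (fun t : ℝ => t/(1 - Real.exp (-η*t))) (nhdsWithin 0 (Set.Ioi 0)) (nhds η⁻¹) := by
      refine hinv.congr (fun t => ?_)
      rw [inv_div]
    rw [show (n:ℝ)/η = (n:ℝ) * η⁻¹ from div_eq_mul_inv _ _]
    exact (h5.const_mul (n:ℝ)).congr fun t => (mul_div_assoc _ _ _).symm
  have hlog : Tendsto (fun t : ℝ => Real.log ((n:ℝ)*t/(1 - Real.exp (-η*t))))
      (nhdsWithin 0 (Set.Ioi 0)) (nhds (Real.log ((n:ℝ)/η))) :=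
    (Real.continuousAt_log (by positivity)).tendsto.comp hq
  have hlin : Tendsto (fun t : ℝ => ((n:ℝ)-η)*t) (nhdsWithin 0 (Set.Ioi 0)) (nhds 0) := by
    have : Tendsto (fun t : ℝ => ((n:ℝ)-η)*t) (nhds 0) (nhds (((n:ℝ)-η)*0)) :=
      (continuous_const.mul continuous_id).tendsto 0
    simpa using this.mono_left nhdsWithin_le_nhds
  have hmain := ((hlog.const_mul ((n:ℝ)-1)).sub hlin).sub_const (Real.log ((n-1).factorial * η))
  rw [sub_zero] at hmain
  rw [hzero] at hmain
  refine Tendsto.congr' ?_ hmain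
  filter_upwards [self_mem_nhdsWithin] with t ht
  have ht : (0:ℝ) < t := ht
  have hex : Real.exp (-η*t) < 1 := by rw [Real.exp_lt_one_iff]; nlinarith
  unfold alzerG
  rw [Real.log_div (by positivity) (by linarith)]

open Filter Topology in
lemma alzerG_scale (n : ℕ) (hn : 1 ≤ n) {η : ℝ} (hη : 0 < η)
    (hzero : ((n:ℝ)-1) * Real.log ((n:ℝ)/η) - Real.log ((n-1).factorial * η) = 0)
    {s t : ℝ} (hs : 0 < s) (hst : s < t) :
    s * alzerG n η t ≤ t * alzerG n η s := by
  have ht : (0:ℝ) < t := hs.trans hst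
  -- eventual concavity inequality
  have hconc := alzerG_concave n hn hη
  have hev : ∀ᶠ ε in nhdsWithin (0:ℝ) (Set.Ioi 0),
      ((t-s)/(t-ε)) * alzerG n η ε + ((s-ε)/(t-ε)) * alzerG n η t ≤ alzerG n η s := by
    have h1 : ∀ᶠ ε in nhdsWithin (0:ℝ) (Set.Ioi 0), ε < s :=
      eventually_nhdsWithin_of_eventually_nhds (eventually_lt_nhds hs)
    filter_upwards [h1, self_mem_nhdsWithin] with ε hεs hε
    have hε : (0:ℝ) < ε := hε
    have hta : (0:ℝ) < t - ε := by linarith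
    have ha : (0:ℝ) ≤ (t-s)/(t-ε) := div_nonneg (by linarith) hta.le
    have hb : (0:ℝ) ≤ (s-ε)/(t-ε) := by
      apply div_nonneg <;> linarith
    have hab : (t-s)/(t-ε) + (s-ε)/(t-ε) = 1 := by
      field_simp
      ring
    have := hconc.2 (Set.mem_Ioi.mpr hε) (Set.mem_Ioi.mpr ht) ha hb hab
    simp only [smul_eq_mul] at this
    have harg : (t-s)/(t-ε) * ε + (s-ε)/(t-ε) * t = s := by
      field_simp
      ring
    rwa [harg] at this
  -- limit of the left side
  have hA : Tendsto (fun ε : ℝ => (t-s)/(t-ε)) (nhdsWithin (0:ℝ) (Set.Ioi 0)) (nhds ((t-s)/t)) := by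
    have : Tendsto (fun ε : ℝ => (t-s)/(t-ε)) (nhds 0) (nhds ((t-s)/(t-0))) :=
      tendsto_const_nhds.div ((continuous_const.sub continuous_id).tendsto 0) (by simpa using ht.ne')
    simpa using this.mono_left nhdsWithin_le_nhds
  have hB : Tendsto (fun ε : ℝ => (s-ε)/(t-ε)) (nhdsWithin (0:ℝ) (Set.Ioi 0)) (nhds (s/t)) := by
    have : Tendsto (fun ε : ℝ => (s-ε)/(t-ε)) (nhds 0) (nhds ((s-0)/(t-0))) :=
      ((continuous_const.sub continuous_id).tendsto 0).div
        ((continuous_const.sub continuous_id).tendsto 0) (by simpa using ht.ne')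
    simpa using this.mono_left nhdsWithin_le_nhds
  have hG0 := alzerG_tendsto_zero n hn hη hzero
  have hlim : Tendsto (fun ε : ℝ => ((t-s)/(t-ε)) * alzerG n η ε + ((s-ε)/(t-ε)) * alzerG n η t)
      (nhdsWithin (0:ℝ) (Set.Ioi 0)) (nhds ((t-s)/t * 0 + s/t * alzerG n η t)) :=
    (hA.mul hG0).add (hB.mul tendsto_const_nhds)
  have hfin : (t-s)/t * 0 + s/t * alzerG n η t ≤ alzerG n η s := le_of_tendsto hlim hev
  rw [mul_zero, zero_add] at hfin
  have := mul_le_mul_of_nonneg_left hfin ht.le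
  calc s * alzerG n η t = t * (s/t * alzerG n η t) := by field_simp
    _ ≤ t * alzerG n η s := this

lemma alzerE_hasDeriv (a : ℝ) (m : ℕ) (hm : 1 ≤ m) (t : ℝ) :
    HasDerivAt (fun t : ℝ => Real.exp (-(a*t)) * ∑ k ∈ Finset.range m, (a*t)^k / k.factorial)
      (-(a * Real.exp (-(a*t)) * (a*t)^(m-1) / (m-1).factorial)) t := by
  induction m with
  | zero => omega
  | succ m ih =>
    have hexp : HasDerivAt (fun t : ℝ => Real.exp (-(a*t))) (-a * Real.exp (-(a*t))) t := by
      have h := ((hasDerivAt_id t).const_mul (-a)).exp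
      simp only [id_eq, neg_mul, mul_one] at h
      convert h using 1
      ring
    rcases Nat.eq_or_lt_of_le (Nat.one_le_iff_ne_zero.mpr (Nat.succ_ne_zero m)) with h1 | h1
    · -- m = 0 case : sum over range 1 is 1
      have hm0 : m = 0 := by omega
      subst hm0
      have hfun : (fun t : ℝ => Real.exp (-(a*t)) * ∑ k ∈ Finset.range (0+1), (a*t)^k / k.factorial)
          = fun t : ℝ => Real.exp (-(a*t)) := by
        funext t; simp
      rw [hfun]
      convert hexp using 1
      norm_num
    · have hm1 : 1 ≤ m := by omega
      have ih := ih hm1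
      -- derivative of the new term exp(-(at)) * (at)^m / m!
      have hpow : HasDerivAt (fun t : ℝ => (a*t)^m) ((m:ℝ) * (a*t)^(m-1) * a) t := by
        have h := (((hasDerivAt_id t).const_mul a).pow m)
        simp only [id_eq, mul_one] at h
        exact h
      have hterm : HasDerivAt (fun t : ℝ => Real.exp (-(a*t)) * ((a*t)^m / m.factorial))
          (-a * Real.exp (-(a*t)) * ((a*t)^m / m.factorial)
            + Real.exp (-(a*t)) * (((m:ℝ) * (a*t)^(m-1) * a) / m.factorial)) t :=
        hexp.mul (hpow.div_const _)
      have hsum := ih.add hterm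
      have hfun : (fun t : ℝ => Real.exp (-(a*t)) * ∑ k ∈ Finset.range (m+1), (a*t)^k / k.factorial)
          = fun t : ℝ => (Real.exp (-(a*t)) * ∑ k ∈ Finset.range m, (a*t)^k / k.factorial)
            + Real.exp (-(a*t)) * ((a*t)^m / m.factorial) := by
        funext t
        rw [Finset.sum_range_succ]
        ring
      rw [hfun]
      refine hsum.congr_deriv ?_
      symm
      have hfacm : (m.factorial : ℝ) ≠ 0 := by exact_mod_cast m.factorial_ne_zero
      have hfacm1 : ((m-1).factorial : ℝ) ≠ 0 := by exact_mod_cast (m-1).factorial_ne_zero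
      have hmfac : (m:ℝ) * (m-1).factorial = m.factorial := by
        have h := Nat.mul_factorial_pred (show m ≠ 0 by omega)
        exact_mod_cast h
      have hpowsplit : (a*t)^m = (a*t)^(m-1) * (a*t) := by
        conv_lhs => rw [show m = (m-1) + 1 by omega]
        rw [pow_succ]
      simp only [Nat.add_sub_cancel]
      rw [hpowsplit]
      field_simp
      linear_combination (-(a * a^(m-1) * t^(m-1))) * hmfac

noncomputable def alzerF (n : ℕ) (η t : ℝ) : ℝ :=
  (1 - Real.exp (-((n:ℝ)*t)) * ∑ k ∈ Finset.range n, ((n:ℝ)*t)^k / k.factorial)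
    - (1 - Real.exp (-η*t))^n

noncomputable def alzerA (n : ℕ) (t : ℝ) : ℝ :=
  (n:ℝ) * Real.exp (-((n:ℝ)*t)) * ((n:ℝ)*t)^(n-1) / (n-1).factorial

noncomputable def alzerB (n : ℕ) (η t : ℝ) : ℝ :=
  (n:ℝ) * (η * Real.exp (-η*t) * (1 - Real.exp (-η*t))^(n-1))

lemma alzerF1_hasDeriv (n : ℕ) (hn : 1 ≤ n) (t : ℝ) :
    HasDerivAt (fun t : ℝ => 1 - Real.exp (-((n:ℝ)*t)) * ∑ k ∈ Finset.range n, ((n:ℝ)*t)^k / k.factorial)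
      (alzerA n t) t := by
  have h1 := alzerE_hasDeriv (n:ℝ) n hn t
  have := h1.const_sub 1
  refine this.congr_deriv ?_
  unfold alzerA
  ring

lemma alzerF_hasDeriv (n : ℕ) (hn : 1 ≤ n) (η t : ℝ) :
    HasDerivAt (alzerF n η) (alzerA n t - alzerB n η t) t := by
  have h2 := alzerF1_hasDeriv n hn t
  have hexp : HasDerivAt (fun t : ℝ => 1 - Real.exp (-η*t)) (η * Real.exp (-η*t)) t := by
    have h := ((hasDerivAt_id t).const_mul (-η)).exp
    simp only [id_eq, neg_mul, mul_one] at h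
    have h2 := h.const_sub 1
    rw [show (fun t : ℝ => 1 - Real.exp (-η*t)) = fun x => 1 - Real.exp (-(η*x)) by simp only [neg_mul]]
    exact h2.congr_deriv (by ring)
  have h3 : HasDerivAt (fun t : ℝ => (1 - Real.exp (-η*t))^n)
      ((n:ℝ) * (1 - Real.exp (-η*t))^(n-1) * (η * Real.exp (-η*t))) t := hexp.pow n
  have h4 := h2.sub h3
  refine h4.congr_deriv ?_
  unfold alzerB
  ring

lemma alzerF_sign (n : ℕ) (hn : 1 ≤ n) {η : ℝ} (hη : 0 < η) {t : ℝ} (ht : 0 < t)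
    (hG : 0 ≤ alzerG n η t) : 0 ≤ alzerA n t - alzerB n η t := by
  have hnp : (0:ℝ) < n := by exact_mod_cast hn
  have hex : Real.exp (-η*t) < 1 := by rw [Real.exp_lt_one_iff]; nlinarith
  have hA : 0 < alzerA n t := by
    unfold alzerA
    positivity
  have hB : 0 < alzerB n η t := by
    unfold alzerB
    have : (0:ℝ) < 1 - Real.exp (-η*t) := by linarith
    positivity
  rw [sub_nonneg]
  rw [← Real.log_le_log_iff hB hA]
  have hcast : ((n-1 : ℕ) : ℝ) = (n:ℝ) - 1 := by
    push_cast [Nat.cast_sub hn]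
    ring
  have hlogA : Real.log (alzerA n t) =
      Real.log (n:ℝ) + (-((n:ℝ)*t)) + ((n:ℝ)-1) * Real.log ((n:ℝ)*t) - Real.log ((n-1).factorial) := by
    unfold alzerA
    rw [Real.log_div (by positivity) (by positivity), Real.log_mul (by positivity) (by positivity),
      Real.log_mul (by positivity) (Real.exp_ne_zero _), Real.log_exp, Real.log_pow, hcast]
  have h1me : (0:ℝ) < 1 - Real.exp (-η*t) := by linarith
  have hlogB : Real.log (alzerB n η t) =
      Real.log (n:ℝ) + Real.log η + (-(η*t)) + ((n:ℝ)-1) * Real.log (1 - Real.exp (-η*t)) := by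
    unfold alzerB
    rw [Real.log_mul (by positivity) (by positivity), Real.log_mul (by positivity) (by positivity),
      Real.log_mul (by positivity) (Real.exp_ne_zero _), Real.log_exp, Real.log_pow, hcast]
    ring
  have hGval : Real.log (alzerA n t) - Real.log (alzerB n η t) = alzerG n η t := by
    rw [hlogA, hlogB]
    unfold alzerG
    rw [Real.log_mul (by positivity) hη.ne']
    ring
  linarith [hGval, hG]

lemma alzerF_sign' (n : ℕ) (hn : 1 ≤ n) {η : ℝ} (hη : 0 < η) {t : ℝ} (ht : 0 < t)
    (hG : alzerG n η t ≤ 0) : alzerA n t - alzerB n η t ≤ 0 := by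
  have hnp : (0:ℝ) < n := by exact_mod_cast hn
  have hex : Real.exp (-η*t) < 1 := by rw [Real.exp_lt_one_iff]; nlinarith
  have hA : 0 < alzerA n t := by unfold alzerA; positivity
  have hB : 0 < alzerB n η t := by
    unfold alzerB
    have : (0:ℝ) < 1 - Real.exp (-η*t) := by linarith
    positivity
  rw [sub_nonpos, ← Real.log_le_log_iff hA hB]
  have hcast : ((n-1 : ℕ) : ℝ) = (n:ℝ) - 1 := by
    push_cast [Nat.cast_sub hn]
    ring
  have hlogA : Real.log (alzerA n t) =
      Real.log (n:ℝ) + (-((n:ℝ)*t)) + ((n:ℝ)-1) * Real.log ((n:ℝ)*t) - Real.log ((n-1).factorial) := by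
    unfold alzerA
    rw [Real.log_div (by positivity) (by positivity), Real.log_mul (by positivity) (by positivity),
      Real.log_mul (by positivity) (Real.exp_ne_zero _), Real.log_exp, Real.log_pow, hcast]
  have h1me : (0:ℝ) < 1 - Real.exp (-η*t) := by linarith
  have hlogB : Real.log (alzerB n η t) =
      Real.log (n:ℝ) + Real.log η + (-(η*t)) + ((n:ℝ)-1) * Real.log (1 - Real.exp (-η*t)) := by
    unfold alzerB
    rw [Real.log_mul (by positivity) (by positivity), Real.log_mul (by positivity) (by positivity),
      Real.log_mul (by positivity) (Real.exp_ne_zero _), Real.log_exp, Real.log_pow, hcast]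
    ring
  have hGval : Real.log (alzerA n t) - Real.log (alzerB n η t) = alzerG n η t := by
    rw [hlogA, hlogB]
    unfold alzerG
    rw [Real.log_mul (by positivity) hη.ne']
    ring
  linarith [hGval, hG]

lemma alzerF_zero (n : ℕ) (hn : 1 ≤ n) (η : ℝ) : alzerF n η 0 = 0 := by
  unfold alzerF
  have hsum : ∑ k ∈ Finset.range n, ((n:ℝ)*0)^k / k.factorial = 1 := by
    rw [Finset.sum_eq_single_of_mem 0 (Finset.mem_range.mpr (by omega))]
    · norm_num
    · intro b _ hb
      rw [mul_zero, zero_pow hb]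
      simp
  rw [hsum]
  simp [Nat.one_le_iff_ne_zero.mp hn]

open Filter Topology in
lemma alzerF_tendsto_zero (n : ℕ) (hn : 1 ≤ n) {η : ℝ} (hη : 0 < η) :
    Tendsto (alzerF n η) atTop (nhds 0) := by
  have hnp : (0:ℝ) < n := by exact_mod_cast hn
  have hmulTop : Tendsto (fun t : ℝ => (n:ℝ)*t) atTop atTop :=
    Tendsto.const_mul_atTop hnp tendsto_id
  have hterm : ∀ k : ℕ, Tendsto (fun t : ℝ => Real.exp (-((n:ℝ)*t)) * (((n:ℝ)*t)^k / k.factorial))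
      atTop (nhds 0) := by
    intro k
    have h := (tendsto_pow_mul_exp_neg_atTop_nhds_zero k).comp hmulTop
    have h2 := h.div_const (k.factorial : ℝ)
    rw [zero_div] at h2
    refine h2.congr (fun t => ?_)
    simp only [Function.comp_apply]
    ring
  have hsum : Tendsto (fun t : ℝ => Real.exp (-((n:ℝ)*t)) * ∑ k ∈ Finset.range n, ((n:ℝ)*t)^k / k.factorial)
      atTop (nhds 0) := by
    have h := tendsto_finset_sum (Finset.range n) (fun k _ => hterm k)
    rw [Finset.sum_const_zero] at h
    refine h.congr (fun t => ?_)
    rw [Finset.mul_sum]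
  have hP : Tendsto (fun t : ℝ => (1 - Real.exp (-η*t))^n) atTop (nhds 1) := by
    have hexp : Tendsto (fun t : ℝ => Real.exp (-η*t)) atTop (nhds 0) := by
      apply Real.tendsto_exp_atBot.comp
      exact Tendsto.const_mul_atTop_of_neg (neg_neg_iff_pos.mpr hη) tendsto_id
    have h1 : Tendsto (fun t : ℝ => 1 - Real.exp (-η*t)) atTop (nhds 1) := by
      have := (tendsto_const_nhds (x := (1:ℝ)) (f := atTop)).sub hexp
      simpa using this
    have := h1.pow n
    simpa using this
  have hfinal := ((tendsto_const_nhds (x := (1:ℝ)) (f := atTop)).sub hsum).sub hP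
  have h0 : (1:ℝ) - 0 - 1 = 0 := by norm_num
  rw [← h0]
  unfold alzerF
  exact hfinal

lemma alzer_core (n : ℕ) (hn : 1 ≤ n) {η : ℝ} (hη : 0 < η)
    (hzero : ((n:ℝ)-1) * Real.log ((n:ℝ)/η) - Real.log ((n-1).factorial * η) = 0)
    {t : ℝ} (ht : 0 < t) : 0 ≤ alzerF n η t := by
  have hderiv : ∀ u : ℝ, HasDerivAt (alzerF n η) (alzerA n u - alzerB n η u) u :=
    fun u => alzerF_hasDeriv n hn η u
  have hdiff : Differentiable ℝ (alzerF n η) := fun u => (hderiv u).differentiableAt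
  by_cases hcase : ∀ s ∈ Set.Ioc (0:ℝ) t, 0 ≤ alzerG n η s
  · -- F is monotone on [0, t]
    have hmono : MonotoneOn (alzerF n η) (Set.Icc 0 t) := by
      apply monotoneOn_of_deriv_nonneg (convex_Icc 0 t) hdiff.continuous.continuousOn
        hdiff.differentiableOn
      intro s hs
      rw [interior_Icc] at hs
      rw [(hderiv s).deriv]
      exact alzerF_sign n hn hη hs.1 (hcase s ⟨hs.1, hs.2.le⟩)
    have := hmono (Set.mem_Icc.mpr ⟨le_refl 0, ht.le⟩) (Set.mem_Icc.mpr ⟨ht.le, le_refl t⟩) ht.le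
    rwa [alzerF_zero n hn η] at this
  · push_neg at hcase
    obtain ⟨s, hs, hGs⟩ := hcase
    have hGneg : ∀ u : ℝ, t ≤ u → alzerG n η u ≤ 0 := by
      intro u hu
      rcases eq_or_lt_of_le (hs.2.trans hu) with rfl | hsu
      · exact hGs.le
      · have hscale := alzerG_scale n hn hη hzero hs.1 hsu
        have hu0 : (0:ℝ) < u := hs.1.trans hsu
        have h1 : u * alzerG n η s < 0 := mul_neg_of_pos_of_neg hu0 hGs
        have h2 : s * alzerG n η u < 0 := lt_of_le_of_lt hscale h1
        by_contra h
        push_neg at h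
        nlinarith [mul_pos hs.1 h]
    have hanti : AntitoneOn (alzerF n η) (Set.Ici t) := by
      apply antitoneOn_of_deriv_nonpos (convex_Ici t) hdiff.continuous.continuousOn
        hdiff.differentiableOn
      intro u hu
      rw [interior_Ici] at hu
      rw [(hderiv u).deriv]
      exact alzerF_sign' n hn hη (ht.trans hu) (hGneg u (le_of_lt hu))
    have hev : ∀ᶠ u in Filter.atTop, alzerF n η u ≤ alzerF n η t := by
      filter_upwards [Filter.eventually_ge_atTop t] with u hu
      exact hanti (Set.mem_Ici.mpr (le_refl t)) (Set.mem_Ici.mpr hu) hu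
    exact le_of_tendsto (alzerF_tendsto_zero n hn hη) hev

lemma alzer_eta_zero (n : ℕ) (hn : 1 ≤ n) :
    ((n:ℝ)-1) * Real.log ((n:ℝ)/((n:ℝ) * ((n.factorial : ℝ) ^ (-(1 / (n : ℝ))))))
      - Real.log ((n-1).factorial * ((n:ℝ) * ((n.factorial : ℝ) ^ (-(1 / (n : ℝ)))))) = 0 := by
  have hnp : (0:ℝ) < n := by exact_mod_cast hn
  have hfacp : (0:ℝ) < (n.factorial : ℝ) := by exact_mod_cast n.factorial_pos
  have hfac1p : (0:ℝ) < ((n-1).factorial : ℝ) := by exact_mod_cast (n-1).factorial_pos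
  set c : ℝ := (n.factorial : ℝ) ^ (-(1 / (n : ℝ))) with hc
  have hcp : 0 < c := Real.rpow_pos_of_pos hfacp _
  have hlogc : Real.log c = -(1/(n:ℝ)) * Real.log (n.factorial : ℝ) := Real.log_rpow hfacp _
  have hηp : 0 < (n:ℝ) * c := by positivity
  have hfacsplit : Real.log (n.factorial : ℝ) = Real.log (n:ℝ) + Real.log ((n-1).factorial : ℝ) := by
    rw [← Real.log_mul hnp.ne' hfac1p.ne']
    congr 1
    rw [show (n:ℝ) * ((n-1).factorial : ℝ) = ((n * (n-1).factorial : ℕ) : ℝ) by push_cast; ring]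
    exact_mod_cast (Nat.mul_factorial_pred (by omega)).symm
  rw [Real.log_div hnp.ne' hηp.ne', Real.log_mul hnp.ne' hcp.ne',
    Real.log_mul hfac1p.ne' hηp.ne', Real.log_mul hnp.ne' hcp.ne', hlogc]
  have hne : (n:ℝ) ≠ 0 := hnp.ne'
  field_simp
  linear_combination (n:ℝ) * hfacsplit

lemma alzer_pdf_eq (n : ℕ) (hn : 1 ≤ n) {x : ℝ} (hx : 0 ≤ x) :
    gammaPDFReal (n:ℝ) (n:ℝ) x = alzerA n x := by
  have hnp : (0:ℝ) < n := by exact_mod_cast hn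
  have hcast : ((n:ℝ)) - 1 = ((n-1 : ℕ) : ℝ) := by
    push_cast [Nat.cast_sub hn]; ring
  unfold gammaPDFReal alzerA
  rw [if_pos hx]
  rw [show ((n:ℝ)) = ((n-1 : ℕ) : ℝ) + 1 by push_cast [Nat.cast_sub hn]; ring] 
  rw [Real.Gamma_nat_eq_factorial]
  rw [show (((n-1:ℕ):ℝ) + 1) = ((n:ℕ):ℝ) by push_cast [Nat.cast_sub hn]; ring]
  rw [hcast, Real.rpow_natCast, Real.rpow_natCast]
  rw [mul_pow]
  rw [show (n:ℕ) = (n-1)+1 from (Nat.succ_pred_eq_of_pos (by omega)).symm]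
  rw [pow_succ]
  simp only [Nat.add_sub_cancel]
  ring

lemma gamma_Iic_eq (n : ℕ) (hn : 1 ≤ n) {t : ℝ} (ht : 0 < t) :
    ((gammaMeasure (n:ℝ) (n:ℝ)) (Set.Iic t)).toReal
      = 1 - Real.exp (-((n:ℝ)*t)) * ∑ k ∈ Finset.range n, ((n:ℝ)*t)^k / k.factorial := by
  have hnp : (0:ℝ) < n := by exact_mod_cast hn
  haveI := isProbabilityMeasure_gammaMeasure hnp hnp
  have h1 : ((gammaMeasure (n:ℝ) (n:ℝ)) (Set.Iic t)).toReal
      = ∫ x in Set.Iic t, gammaPDFReal (n:ℝ) (n:ℝ) x := by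
    rw [← cdf_gammaMeasure_eq_integral hnp hnp, cdf_eq_real, measureReal_def]
  have h2 : ∫ x in Set.Iic t, gammaPDFReal (n:ℝ) (n:ℝ) x
      = ∫ x in Set.Icc 0 t, gammaPDFReal (n:ℝ) (n:ℝ) x := by
    have h := setIntegral_eq_of_subset_of_forall_diff_eq_zero (μ := volume)
      (s := Set.Icc (0:ℝ) t) (t := Set.Iic t) (f := gammaPDFReal (n:ℝ) (n:ℝ))
      measurableSet_Iic (fun x hx => hx.2) ?_
    · exact h
    · intro x hx
      simp only [Set.mem_diff, Set.mem_Iic, Set.mem_Icc] at hx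
      have hxneg : x < 0 := by
        by_contra h
        push_neg at h
        exact hx.2 ⟨h, hx.1⟩
      unfold gammaPDFReal
      rw [if_neg (not_le.mpr hxneg)]
  have h3 : ∫ x in Set.Icc 0 t, gammaPDFReal (n:ℝ) (n:ℝ) x
      = ∫ x in (0:ℝ)..t, alzerA n x := by
    rw [MeasureTheory.integral_Icc_eq_integral_Ioc, ← intervalIntegral.integral_of_le ht.le]
    refine intervalIntegral.integral_congr (fun x hx => ?_)
    rw [Set.uIcc_of_le ht.le] at hx
    exact alzer_pdf_eq n hn hx.1
  have hF0 : (1 : ℝ) - Real.exp (-((n:ℝ)*0)) * ∑ k ∈ Finset.range n, ((n:ℝ)*0)^k / k.factorial = 0 := by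
    have hsum : ∑ k ∈ Finset.range n, ((n:ℝ)*0)^k / k.factorial = 1 := by
      rw [Finset.sum_eq_single_of_mem 0 (Finset.mem_range.mpr (by omega))]
      · norm_num
      · intro b _ hb
        rw [mul_zero, zero_pow hb]
        simp
    rw [hsum]
    simp
  have h4 : ∫ x in (0:ℝ)..t, alzerA n x
      = (1 - Real.exp (-((n:ℝ)*t)) * ∑ k ∈ Finset.range n, ((n:ℝ)*t)^k / k.factorial)
        - (1 - Real.exp (-((n:ℝ)*0)) * ∑ k ∈ Finset.range n, ((n:ℝ)*0)^k / k.factorial) := by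
    refine intervalIntegral.integral_eq_sub_of_hasDerivAt (fun x _ => alzerF1_hasDeriv n hn x) ?_
    apply Continuous.intervalIntegrable
    unfold alzerA
    fun_prop
  rw [h1, h2, h3, h4, hF0]
  ring

/-- (Alzer's inequality.)  For `X ~ Gamma(N, N)` with integer shape `N ≥ 1` (normalized
Nakagami-`N` fading power, mean 1) and any `t > 0`:
`P[X ≤ t] ≥ (1 − e^(−ηt))^N` where `η = N (N!)^(−1/N)`. -/
theorem alzer_inequality_gamma (N : ℕ) (hN : 1 ≤ N) (t : ℝ) (ht : 0 < t) :
    (1 - Real.exp (-((N : ℝ) * ((N.factorial : ℝ) ^ (-(1 / (N : ℝ))))) * t)) ^ N ≤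
      ((gammaMeasure (N : ℝ) (N : ℝ)) (Set.Iic t)).toReal := by
  have hfacp : (0:ℝ) < (N.factorial : ℝ) := by exact_mod_cast N.factorial_pos
  have hNp : (0:ℝ) < N := by exact_mod_cast hN
  have hηp : 0 < (N : ℝ) * ((N.factorial : ℝ) ^ (-(1 / (N : ℝ)))) := by positivity
  have hcore := alzer_core N hN hηp (alzer_eta_zero N hN) ht
  unfold alzerF at hcore
  rw [gamma_Iic_eq N hN ht]
  linarith
end

section
/- The function A(R) = (λR/B)·Q(2^{R/B} − 1), where Q(τ) = 1/₂F₁(−2/α, 1; 1 − 2/α; −τ) with α > 2, satisfies A(R) → 0 as R → 0⁺ and A(R) → 0 as R → ∞; hence A attains a maximum at some finite R* > 0. -/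
open MeasureTheory Real Set Filter Topology

/-- Coverage probability `Q(τ) = 1/₂F₁(−2/α,1;1−2/α;−τ)`. -/
noncomputable def covQ (α τ : ℝ) : ℝ := 1 / hyp2F1 α 1 (-τ)

/-!
With `I(τ) = ∫_{u>1} (1 - (1 + τ u^(-α))⁻¹) u du` we have `₂F₁ = 1 + 2 I`, so `Q = 1 / (1 + 2 I)`.
The integrand lies between `0` and `τ u^(1-α)`, which is integrable for `α > 2`; this gives
`0 < Q ≤ 1` and, by dominated convergence, continuity of `Q`. On `(1, τ^(1/α)]` the integrand is
at least `u / 2`, so `₂F₁(τ) ≥ (1 + τ^(2/α)) / 2` and, by subadditivity of `t ↦ t^(2/α)`,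
`Q(τ) ≤ 2 (1 + τ)^(-2/α)`. For `τ = 2^(R/B) - 1` this reads `Q ≤ 2 e^(-cR)`, so `A(R)` is squeezed
to `0` by `λR/B` as `R → 0⁺` and by `C R e^(-cR)` as `R → ∞`. A continuous positive function on
`(0, ∞)` vanishing at both ends is below its value at `1` outside a compact interval, on which it
attains its maximum.
-/

theorem ContinuousOn.exists_isMaxOn_Ioi_of_tendsto {X Y : Type*}
    [ConditionallyCompleteLinearOrder X] [TopologicalSpace X] [OrderTopology X]
    [LinearOrder Y] [TopologicalSpace Y] [OrderClosedTopology Y] {f : X → Y} {a x₀ : X} {y : Y} (hf : ContinuousOn f (Ioi a))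
    (hbot : Tendsto f (𝓝[>] a) (𝓝 y)) (htop : Tendsto f atTop (𝓝 y)) (hx₀ : a < x₀)
    (hy : y < f x₀) : ∃ x, a < x ∧ IsMaxOn f (Ioi a) x := by
  obtain ⟨c, hc, hsmall⟩ :=
    (mem_nhdsGT_iff_exists_mem_Ioc_Ioo_subset hx₀).1 (hbot (Iio_mem_nhds hy))
  obtain ⟨M, hlarge⟩ := eventually_atTop.1 (htop (Iio_mem_nhds hy))
  have hx₀K : x₀ ∈ Icc c (max M x₀) := ⟨hc.2, le_max_right _ _⟩
  obtain ⟨x, hxK, hmax⟩ := isCompact_Icc.exists_isMaxOn ⟨x₀, hx₀K⟩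
    (hf.mono fun z hz => hc.1.trans_le hz.1)
  have hfx₀ : f x₀ ≤ f x := hmax hx₀K
  refine ⟨x, hc.1.trans_le hxK.1, fun z hz => ?_⟩
  rcases lt_or_ge z c with hzc | hzc
  · exact (hsmall ⟨hz, hzc⟩).le.trans hfx₀
  rcases le_or_gt z (max M x₀) with hzM | hzM
  · exact hmax ⟨hzc, hzM⟩
  · exact (hlarge z ((le_max_left _ _).trans hzM.le)).le.trans hfx₀

noncomputable def covIntegrand (α τ u : ℝ) : ℝ := (1 - (1 + τ * u ^ (-α))⁻¹) * u

lemma hyp2F1_one_neg (α τ : ℝ) :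
    hyp2F1 α 1 (-τ) = 1 + 2 * ∫ u in Ioi (1 : ℝ), covIntegrand α τ u := by
  simp only [hyp2F1, covIntegrand, rpow_neg_one, neg_mul, sub_neg_eq_add]

section covIntegrand

variable {α τ u : ℝ}

lemma covIntegrand_nonneg (hτ : 0 ≤ τ) (hu : 0 ≤ u) : 0 ≤ covIntegrand α τ u :=
  mul_nonneg (sub_nonneg.2 <| inv_le_one_of_one_le₀ <|
    le_add_of_nonneg_right <| mul_nonneg hτ (rpow_nonneg hu _)) hu

lemma covIntegrand_le (hτ : 0 ≤ τ) (hu : 0 < u) : covIntegrand α τ u ≤ τ * u ^ (1 - α) := by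
  set s := τ * u ^ (-α)
  have hs : 0 ≤ s := mul_nonneg hτ (rpow_nonneg hu.le _)
  have h1 : 1 - (1 + s)⁻¹ ≤ s := by
    have h : 1 - s ≤ 1 / (1 + s) := (le_div_iff₀ (by positivity)).2 (by nlinarith)
    rw [one_div] at h
    linarith
  calc covIntegrand α τ u ≤ s * u := mul_le_mul_of_nonneg_right h1 hu.le
    _ = τ * u ^ (1 - α) := by rw [mul_assoc, ← rpow_add_one hu.ne']; ring_nf

lemma half_le_covIntegrand (hu : 0 < u) (huτ : u ^ α ≤ τ) : u / 2 ≤ covIntegrand α τ u := by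
  have hs : 1 ≤ τ * u ^ (-α) := by
    rw [rpow_neg hu.le, ← div_eq_mul_inv, one_le_div (rpow_pos_of_pos hu _)]
    exact huτ
  have h : (1 + τ * u ^ (-α))⁻¹ ≤ 1 / 2 := by
    rw [inv_le_comm₀ (by linarith) (by norm_num)]; linarith
  unfold covIntegrand
  nlinarith

lemma continuousOn_covIntegrand (hτ : 0 ≤ τ) : ContinuousOn (covIntegrand α τ) (Ioi 0) := by
  refine (continuousOn_const.sub (ContinuousOn.inv₀ ?_ fun u hu => ?_)).mul continuousOn_id
  · exact continuousOn_const.add <| continuousOn_const.mul <|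
      continuousOn_id.rpow_const fun u hu => Or.inl hu.ne'
  · exact (add_pos_of_pos_of_nonneg one_pos (mul_nonneg hτ (rpow_nonneg (le_of_lt hu) _))).ne'

lemma integrableOn_covIntegrand (hα : 2 < α) (hτ : 0 ≤ τ) :
    IntegrableOn (covIntegrand α τ) (Ioi 1) := by
  refine ((integrableOn_Ioi_rpow_of_lt (show 1 - α < -1 by linarith) one_pos).const_mul τ).mono'
    ((continuousOn_covIntegrand hτ).mono (Ioi_subset_Ioi zero_le_one)
      |>.aestronglyMeasurable measurableSet_Ioi) ?_
  refine (ae_restrict_iff' measurableSet_Ioi).2 (Eventually.of_forall fun u hu => ?_)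
  have hu : (0 : ℝ) < u := one_pos.trans hu
  rw [norm_of_nonneg (covIntegrand_nonneg hτ hu.le)]
  exact covIntegrand_le hτ hu

lemma integral_covIntegrand_nonneg (hτ : 0 ≤ τ) : 0 ≤ ∫ u in Ioi (1 : ℝ), covIntegrand α τ u :=
  setIntegral_nonneg measurableSet_Ioi fun _ hu => covIntegrand_nonneg hτ (zero_le_one.trans hu.le)

lemma rpow_sub_one_div_four_le_integral_covIntegrand (hα : 2 < α) (hτ : 1 ≤ τ) :
    (τ ^ (2 / α) - 1) / 4 ≤ ∫ u in Ioi (1 : ℝ), covIntegrand α τ u := by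
  have hα₀ : 0 < α := by linarith
  have hτ₀ : 0 ≤ τ := by linarith
  set T := τ ^ α⁻¹
  have hT : 1 ≤ T := one_le_rpow hτ (inv_nonneg.2 hα₀.le)
  have hTα : T ^ α = τ := rpow_inv_rpow hτ₀ hα₀.ne'
  have hT2 : T ^ (2 : ℝ) = τ ^ (2 / α) := by
    rw [← rpow_mul hτ₀, inv_mul_eq_div]
  have hint := integrableOn_covIntegrand hα hτ₀
  calc (τ ^ (2 / α) - 1) / 4 = ∫ u in Ioc 1 T, u / 2 := by
        rw [← intervalIntegral.integral_of_le hT, intervalIntegral.integral_div, integral_id,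
          ← hT2, rpow_two]
        ring
    _ ≤ ∫ u in Ioc 1 T, covIntegrand α τ u :=
        setIntegral_mono_on (continuous_id.div_const 2).integrableOn_Ioc
          (hint.mono_set Ioc_subset_Ioi_self) measurableSet_Ioc fun u hu =>
            half_le_covIntegrand (one_pos.trans hu.1)
              (hTα ▸ rpow_le_rpow (one_pos.trans hu.1).le hu.2 hα₀.le)
    _ ≤ ∫ u in Ioi 1, covIntegrand α τ u :=
        setIntegral_mono_set hint
          ((ae_restrict_iff' measurableSet_Ioi).2 <| Eventually.of_forall fun u hu =>
            covIntegrand_nonneg hτ₀ (zero_le_one.trans hu.le))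
          (Eventually.of_forall Ioc_subset_Ioi_self)

lemma one_le_hyp2F1_s18 (hτ : 0 ≤ τ) : 1 ≤ hyp2F1 α 1 (-τ) := by
  rw [hyp2F1_one_neg]
  linarith [integral_covIntegrand_nonneg (α := α) hτ]

lemma one_add_rpow_div_two_le_hyp2F1 (hα : 2 < α) (hτ : 0 ≤ τ) :
    (1 + τ ^ (2 / α)) / 2 ≤ hyp2F1 α 1 (-τ) := by
  rcases le_total τ 1 with hτ₁ | hτ₁
  · linarith [one_le_hyp2F1_s18 (α := α) hτ, rpow_le_one hτ hτ₁ (by positivity : 0 ≤ 2 / α)]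
  · rw [hyp2F1_one_neg]
    linarith [rpow_sub_one_div_four_le_integral_covIntegrand hα hτ₁]

lemma covQ_pos (hτ : 0 ≤ τ) : 0 < covQ α τ :=
  one_div_pos.2 (one_pos.trans_le (one_le_hyp2F1_s18 hτ))

lemma covQ_le_one (hτ : 0 ≤ τ) : covQ α τ ≤ 1 :=
  (div_le_one (one_pos.trans_le (one_le_hyp2F1_s18 hτ))).2 (one_le_hyp2F1_s18 hτ)

lemma covQ_le_two_mul_one_add_rpow (hα : 2 < α) (hτ : 0 ≤ τ) :
    covQ α τ ≤ 2 * (1 + τ) ^ (-(2 / α)) := by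
  have hp : 0 < 2 / α := by positivity
  have hsub : (1 + τ) ^ (2 / α) ≤ 1 + τ ^ (2 / α) := by
    simpa using rpow_add_le_add_rpow zero_le_one hτ hp.le ((div_le_one (by linarith)).2 hα.le)
  have hpos : 0 < (1 + τ) ^ (2 / α) := rpow_pos_of_pos (by linarith) _
  calc covQ α τ ≤ 1 / ((1 + τ ^ (2 / α)) / 2) :=
        one_div_le_one_div_of_le (by positivity) (one_add_rpow_div_two_le_hyp2F1 hα hτ)
    _ = 2 / (1 + τ ^ (2 / α)) := one_div_div _ _
    _ ≤ 2 / (1 + τ) ^ (2 / α) := div_le_div_of_nonneg_left zero_le_two hpos hsub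
    _ = 2 * (1 + τ) ^ (-(2 / α)) := by rw [rpow_neg (by linarith), div_eq_mul_inv]

lemma continuousAt_covQ (hα : 2 < α) (hτ : 0 < τ) : ContinuousAt (covQ α) τ := by
  have hI : ContinuousAt (fun σ => ∫ u in Ioi (1 : ℝ), covIntegrand α σ u) τ := by
    have hnear : ∀ᶠ σ in 𝓝 τ, σ ∈ Ioo 0 (τ + 1) := Ioo_mem_nhds hτ (lt_add_one τ)
    refine continuousAt_of_dominated (bound := fun u => (τ + 1) * u ^ (1 - α)) ?_ ?_
      ((integrableOn_Ioi_rpow_of_lt (show 1 - α < -1 by linarith) one_pos).const_mul _) ?_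
    · filter_upwards [hnear] with σ hσ
      exact (continuousOn_covIntegrand hσ.1.le).mono (Ioi_subset_Ioi zero_le_one)
        |>.aestronglyMeasurable measurableSet_Ioi
    · filter_upwards [hnear] with σ hσ
      refine (ae_restrict_iff' measurableSet_Ioi).2 (Eventually.of_forall fun u hu => ?_)
      have hu : (0 : ℝ) < u := one_pos.trans hu
      rw [norm_of_nonneg (covIntegrand_nonneg hσ.1.le hu.le)]
      exact (covIntegrand_le hσ.1.le hu).trans <|
        mul_le_mul_of_nonneg_right hσ.2.le (rpow_nonneg hu.le _)
    · refine (ae_restrict_iff' measurableSet_Ioi).2 (Eventually.of_forall fun u hu => ?_)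
      have hu : (0 : ℝ) < u := one_pos.trans hu
      have hne : 1 + τ * u ^ (-α) ≠ 0 := by positivity
      unfold covIntegrand
      fun_prop (disch := exact hne)
  have hne : 1 + 2 * ∫ u in Ioi (1 : ℝ), covIntegrand α τ u ≠ 0 := by
    linarith [integral_covIntegrand_nonneg (α := α) hτ.le]
  have hQ : covQ α = fun σ => 1 / (1 + 2 * ∫ u in Ioi (1 : ℝ), covIntegrand α σ u) :=
    funext fun σ => by rw [covQ, hyp2F1_one_neg]
  rw [hQ]
  exact continuousAt_const.div (continuousAt_const.add (continuousAt_const.mul hI)) hne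

end covIntegrand

noncomputable def tierASE (l B α R : ℝ) : ℝ := l * R / B * covQ α (2 ^ (R / B) - 1)

section tierASE

variable {l B α R : ℝ}

lemma two_rpow_div_sub_one_pos (hB : 0 < B) (hR : 0 < R) : 0 < (2 : ℝ) ^ (R / B) - 1 :=
  sub_pos.2 (one_lt_rpow one_lt_two (div_pos hR hB))

lemma tierASE_pos (hl : 0 < l) (hB : 0 < B) (hR : 0 < R) : 0 < tierASE l B α R :=
  mul_pos (by positivity) (covQ_pos (two_rpow_div_sub_one_pos hB hR).le)

lemma norm_tierASE (hB : 0 < B) (hR : 0 < R) :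
    ‖tierASE l B α R‖ = |l| * R / B * covQ α (2 ^ (R / B) - 1) := by
  rw [tierASE, norm_mul, norm_of_nonneg (covQ_pos (two_rpow_div_sub_one_pos hB hR).le).le,
    norm_div, norm_mul, norm_of_nonneg hR.le, norm_of_nonneg hB.le, Real.norm_eq_abs]

lemma norm_tierASE_le (hB : 0 < B) (hR : 0 < R) : ‖tierASE l B α R‖ ≤ |l| * R / B := by
  rw [norm_tierASE hB hR]
  exact mul_le_of_le_one_right (by positivity) (covQ_le_one (two_rpow_div_sub_one_pos hB hR).le)

lemma norm_tierASE_le_mul_exp (hB : 0 < B) (hα : 2 < α) (hR : 0 < R) :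
    ‖tierASE l B α R‖ ≤ 2 * |l| / B * (R * exp (-(2 * log 2 / (α * B)) * R)) := by
  have hτ := (two_rpow_div_sub_one_pos hB hR).le
  have hdecay : (1 + ((2 : ℝ) ^ (R / B) - 1)) ^ (-(2 / α)) = exp (-(2 * log 2 / (α * B)) * R) := by
    rw [add_sub_cancel, ← rpow_mul zero_le_two, rpow_def_of_pos two_pos]
    congr 1
    field_simp
  rw [norm_tierASE hB hR]
  calc |l| * R / B * covQ α (2 ^ (R / B) - 1)
      ≤ |l| * R / B * (2 * exp (-(2 * log 2 / (α * B)) * R)) := by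
        rw [← hdecay]
        exact mul_le_mul_of_nonneg_left (covQ_le_two_mul_one_add_rpow hα hτ) (by positivity)
    _ = 2 * |l| / B * (R * exp (-(2 * log 2 / (α * B)) * R)) := by ring

lemma tendsto_tierASE_nhdsGT_zero (hB : 0 < B) : Tendsto (tierASE l B α) (𝓝[>] 0) (𝓝 0) := by
  refine squeeze_zero_norm' (eventually_mem_nhdsWithin.mono fun R hR => norm_tierASE_le hB hR) ?_
  exact (((continuous_const.mul continuous_id).div_const B).tendsto' 0 0 (by simp)).mono_left
    nhdsWithin_le_nhds

lemma tendsto_tierASE_atTop (hB : 0 < B) (hα : 2 < α) : Tendsto (tierASE l B α) atTop (𝓝 0) := by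
  refine squeeze_zero_norm'
    ((eventually_gt_atTop 0).mono fun R hR => norm_tierASE_le_mul_exp hB hα hR) ?_
  have hb : 0 < 2 * log 2 / (α * B) :=
    div_pos (mul_pos two_pos (log_pos one_lt_two)) (by positivity)
  simpa using (tendsto_rpow_mul_exp_neg_mul_atTop_nhds_zero 1 _ hb).const_mul (2 * |l| / B)

lemma continuousOn_tierASE (hB : 0 < B) (hα : 2 < α) : ContinuousOn (tierASE l B α) (Ioi 0) :=
  fun _ hR => ContinuousAt.continuousWithinAt <|
    ((continuous_const.mul continuous_id).div_const B).continuousAt.mul <|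
      (continuousAt_covQ hα (two_rpow_div_sub_one_pos hB hR)).comp
        (f := fun R => (2 : ℝ) ^ (R / B) - 1) <|
        ((continuous_const.rpow (continuous_id.div_const B) fun _ => Or.inl two_ne_zero).sub
          continuous_const).continuousAt

end tierASE

/-- One tier's ASE contribution `A(R) = (λ R / B) Q(2^(R/B) − 1)` (Proposition 1) satisfies
`A(R) → 0` as `R → 0⁺` and as `R → ∞`; hence `A` attains its maximum over `(0,∞)` at some
finite `R* > 0`. -/
theorem ase_attains_maximum (l B α : ℝ) (hl : 0 < l) (hB : 0 < B) (hα : 2 < α) :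
    Tendsto (fun R : ℝ => l * R / B * covQ α (2 ^ (R / B) - 1)) (𝓝[>] 0) (𝓝 0) ∧
    Tendsto (fun R : ℝ => l * R / B * covQ α (2 ^ (R / B) - 1)) atTop (𝓝 0) ∧
    ∃ Rstar : ℝ, 0 < Rstar ∧ ∀ R : ℝ, 0 < R →
      l * R / B * covQ α (2 ^ (R / B) - 1) ≤
        l * Rstar / B * covQ α (2 ^ (Rstar / B) - 1) := by
  have hbot := tendsto_tierASE_nhdsGT_zero (l := l) (α := α) hB
  have htop := tendsto_tierASE_atTop (l := l) hB hα
  obtain ⟨Rstar, hRstar, hmax⟩ := (continuousOn_tierASE hB hα).exists_isMaxOn_Ioi_of_tendsto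
    hbot htop one_pos (tierASE_pos hl hB one_pos)
  exact ⟨hbot, htop, Rstar, hRstar, fun R hR => hmax hR⟩
end

section
/- For α > 2, the function τ ↦ ₂F₁(−2/α, 1; 1 − 2/α; −τ) is strictly increasing on [0, ∞), equals 1 at τ = 0, and grows like C·τ^{2/α} as τ → ∞ for some constant C > 0; consequently the coverage probability Q(τ) = 1/₂F₁(−2/α,1;1−2/α;−τ) is strictly decreasing from 1 to 0. -/
open MeasureTheory Real Set Filter Topology

theorem setIntegral_pos_of_forall_pos {X : Type*} [MeasurableSpace X] {μ : Measure X}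
    {s : Set X} {f : X → ℝ} (hs : MeasurableSet s) (hμs : μ s ≠ 0)
    (hf : IntegrableOn f s μ) (hpos : ∀ x ∈ s, 0 < f x) : 0 < ∫ x in s, f x ∂μ := by
  rw [setIntegral_pos_iff_support_of_nonneg_ae
    ((ae_restrict_mem hs).mono fun x hx => (hpos x hx).le) hf]
  exact pos_iff_ne_zero.2 fun h => hμs <|
    measure_mono_null (fun x hx => ⟨(hpos x hx).ne', hx⟩ : s ⊆ Function.support f ∩ s) h

theorem tendsto_setIntegral_Ioi_nhdsGT {E : Type*} [NormedAddCommGroup E] [NormedSpace ℝ E]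
    {f : ℝ → E} {a : ℝ} (hf : IntegrableOn f (Ioi a)) :
    Tendsto (fun ε => ∫ x in Ioi ε, f x) (𝓝[>] a) (𝓝 (∫ x in Ioi a, f x)) := by
  simp_rw [← integral_indicator measurableSet_Ioi]
  refine tendsto_integral_filter_of_dominated_convergence (fun x => ‖(Ioi a).indicator f x‖)
    ?_ ?_ (hf.integrable_indicator measurableSet_Ioi).norm ?_
  · filter_upwards [self_mem_nhdsWithin] with ε (hε : a < ε)
    exact ((hf.mono_set (Ioi_subset_Ioi hε.le)).integrable_indicator
      measurableSet_Ioi).aestronglyMeasurable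
  · filter_upwards [self_mem_nhdsWithin] with ε (hε : a < ε)
    exact ae_of_all _ (norm_indicator_le_of_subset (Ioi_subset_Ioi hε.le) f)
  · refine ae_of_all _ fun x => tendsto_const_nhds.congr' ?_
    rcases lt_or_ge a x with hax | hxa
    · filter_upwards [Ioo_mem_nhdsGT hax] with ε hε
      rw [indicator_of_mem (show x ∈ Ioi a from hax), indicator_of_mem (show x ∈ Ioi ε from hε.2)]
    · filter_upwards [self_mem_nhdsWithin] with ε (hε : a < ε)
      rw [indicator_of_notMem (show x ∉ Ioi a from not_lt.2 hxa),
        indicator_of_notMem (show x ∉ Ioi ε from not_lt.2 (hxa.trans hε.le))]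

noncomputable def hyp2F1Integrand (α τ u : ℝ) : ℝ := τ * u / (u ^ α + τ)

section hyp2F1Integrand

variable {α τ u : ℝ}

theorem hyp2F1_one_neg_eq (α : ℝ) (hτ : 0 ≤ τ) :
    hyp2F1 α 1 (-τ) = 1 + 2 * ∫ u in Ioi 1, hyp2F1Integrand α τ u := by
  unfold hyp2F1
  congr 2
  refine setIntegral_congr_fun measurableSet_Ioi fun u (hu : 1 < u) => ?_
  have hpos : 0 < u ^ α := rpow_pos_of_pos (one_pos.trans hu) α
  have hden : u ^ α + τ ≠ 0 := by positivity
  rw [rpow_neg (one_pos.trans hu).le, rpow_neg_one, hyp2F1Integrand,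
    show 1 - -τ * (u ^ α)⁻¹ = (u ^ α + τ) / u ^ α by field_simp; ring, inv_div]
  field_simp
  ring

theorem hyp2F1Integrand_nonneg (hτ : 0 ≤ τ) (hu : 0 ≤ u) : 0 ≤ hyp2F1Integrand α τ u := by
  have := rpow_nonneg hu α
  unfold hyp2F1Integrand
  positivity

theorem hyp2F1Integrand_le_self (hτ : 0 ≤ τ) (hu : 0 ≤ u) : hyp2F1Integrand α τ u ≤ u := by
  have := rpow_nonneg hu α
  rw [hyp2F1Integrand, mul_comm, mul_div_assoc]
  exact mul_le_of_le_one_right hu (div_le_one_of_le₀ (by linarith) (by linarith))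

theorem hyp2F1Integrand_le_mul_rpow (hτ : 0 ≤ τ) (hu : 0 < u) :
    hyp2F1Integrand α τ u ≤ τ * u ^ (1 - α) := by
  have hpos : 0 < u ^ α := rpow_pos_of_pos hu α
  rw [hyp2F1Integrand, rpow_sub hu, rpow_one, mul_div_assoc]
  exact mul_le_mul_of_nonneg_left (div_le_div_of_nonneg_left hu.le hpos (by linarith)) hτ

theorem hyp2F1Integrand_lt_of_lt {σ : ℝ} (hτ : 0 ≤ τ) (hτσ : τ < σ) (hu : 0 < u) :
    hyp2F1Integrand α τ u < hyp2F1Integrand α σ u := by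
  have hpos : 0 < u ^ α := rpow_pos_of_pos hu α
  rw [hyp2F1Integrand, hyp2F1Integrand, div_lt_div_iff₀ (by linarith) (by linarith)]
  nlinarith [mul_pos (mul_pos (sub_pos.2 hτσ) hu) hpos]

theorem hyp2F1Integrand_mul_rpow (hα : α ≠ 0) (hτ : 0 < τ) (hu : 0 ≤ u) :
    hyp2F1Integrand α τ (τ ^ α⁻¹ * u) = τ ^ α⁻¹ * hyp2F1Integrand α 1 u := by
  have hpos : 0 < u ^ α + 1 := by linarith [rpow_nonneg hu α]
  rw [hyp2F1Integrand, hyp2F1Integrand, mul_rpow (rpow_nonneg hτ.le _) hu, rpow_inv_rpow hτ.le hα]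
  field_simp

theorem integrableOn_hyp2F1Integrand (hα : 2 < α) (hτ : 0 ≤ τ) :
    IntegrableOn (hyp2F1Integrand α τ) (Ioi 0) := by
  have hcont : ContinuousOn (hyp2F1Integrand α τ) (Ioi 0) := fun u (hu : 0 < u) =>
    ((continuousAt_const.mul continuousAt_id).div
      ((continuousAt_rpow_const u α (Or.inl hu.ne')).add continuousAt_const)
      (add_pos_of_pos_of_nonneg (rpow_pos_of_pos hu α) hτ).ne').continuousWithinAt
  have hmeas (s : Set ℝ) (hs : s ⊆ Ioi 0) (hsm : MeasurableSet s) :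
      AEStronglyMeasurable (hyp2F1Integrand α τ) (volume.restrict s) :=
    (hcont.mono hs).aestronglyMeasurable hsm
  have hnear : IntegrableOn (hyp2F1Integrand α τ) (Ioc 0 1) := by
    refine (integrableOn_const (C := (1 : ℝ)) (by simp)).mono'
      (hmeas _ Ioc_subset_Ioi_self measurableSet_Ioc) ?_
    filter_upwards [ae_restrict_mem measurableSet_Ioc] with u hu
    rw [norm_of_nonneg (hyp2F1Integrand_nonneg hτ hu.1.le)]
    exact (hyp2F1Integrand_le_self hτ hu.1.le).trans hu.2
  have hfar : IntegrableOn (hyp2F1Integrand α τ) (Ioi 1) := by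
    refine ((integrableOn_Ioi_rpow_of_lt (show 1 - α < -1 by linarith) one_pos).const_mul τ).mono'
      (hmeas _ (Ioi_subset_Ioi zero_le_one) measurableSet_Ioi) ?_
    filter_upwards [ae_restrict_mem measurableSet_Ioi] with u (hu : 1 < u)
    rw [norm_of_nonneg (hyp2F1Integrand_nonneg hτ (zero_le_one.trans hu.le))]
    exact hyp2F1Integrand_le_mul_rpow hτ (one_pos.trans hu)
  simpa only [Ioc_union_Ioi_eq_Ioi zero_le_one] using hnear.union hfar

theorem integral_hyp2F1Integrand_eq (hα : α ≠ 0) (hτ : 0 < τ) :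
    ∫ u in Ioi 1, hyp2F1Integrand α τ u =
      τ ^ (2 / α) * ∫ v in Ioi (τ ^ (-α⁻¹)), hyp2F1Integrand α 1 v := by
  set b := τ ^ α⁻¹
  have hb : 0 < b := rpow_pos_of_pos hτ _
  have hb_mul : b * τ ^ (-α⁻¹) = 1 := by
    rw [← rpow_add hτ, add_neg_cancel, rpow_zero]
  calc ∫ u in Ioi 1, hyp2F1Integrand α τ u
      = b • ∫ v in Ioi (τ ^ (-α⁻¹)), hyp2F1Integrand α τ (b * v) := by
        rw [integral_comp_mul_left_Ioi' _ _ hb, hb_mul]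
    _ = b * ∫ v in Ioi (τ ^ (-α⁻¹)), b * hyp2F1Integrand α 1 v := by
        rw [smul_eq_mul, setIntegral_congr_fun measurableSet_Ioi fun v (hv : _ < v) =>
          hyp2F1Integrand_mul_rpow hα hτ ((rpow_pos_of_pos hτ _).le.trans hv.le)]
    _ = τ ^ (2 / α) * ∫ v in Ioi (τ ^ (-α⁻¹)), hyp2F1Integrand α 1 v := by
        rw [integral_const_mul, ← mul_assoc, ← rpow_add hτ, ← two_mul, div_eq_mul_inv]

theorem hyp2F1_one_neg_zero (α : ℝ) : hyp2F1 α 1 (-(0 : ℝ)) = 1 := by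
  rw [hyp2F1_one_neg_eq α le_rfl]
  simp [hyp2F1Integrand]

theorem strictMonoOn_hyp2F1_one_neg (hα : 2 < α) :
    StrictMonoOn (fun τ : ℝ => hyp2F1 α 1 (-τ)) (Ici 0) := by
  intro a (ha : 0 ≤ a) b (hb : 0 ≤ b) hab
  have hint (τ : ℝ) (hτ : 0 ≤ τ) : IntegrableOn (hyp2F1Integrand α τ) (Ioi 1) :=
    (integrableOn_hyp2F1Integrand hα hτ).mono_set (Ioi_subset_Ioi zero_le_one)
  have hgap : 0 < ∫ u in Ioi 1, (hyp2F1Integrand α b u - hyp2F1Integrand α a u) :=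
    setIntegral_pos_of_forall_pos measurableSet_Ioi (by simp) ((hint b hb).sub (hint a ha))
      fun u (hu : 1 < u) => sub_pos.2 (hyp2F1Integrand_lt_of_lt ha hab (one_pos.trans hu))
  rw [integral_sub (hint b hb) (hint a ha)] at hgap
  simp only [hyp2F1_one_neg_eq α ha, hyp2F1_one_neg_eq α hb]
  linarith

theorem integral_hyp2F1Integrand_one_pos (hα : 2 < α) :
    0 < ∫ v in Ioi 0, hyp2F1Integrand α 1 v :=
  setIntegral_pos_of_forall_pos measurableSet_Ioi (by simp)
    (integrableOn_hyp2F1Integrand hα zero_le_one) fun v (hv : 0 < v) => by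
      have := rpow_pos_of_pos hv α
      unfold hyp2F1Integrand
      positivity

theorem tendsto_hyp2F1_one_neg_div_rpow (hα : 2 < α) :
    Tendsto (fun τ : ℝ => hyp2F1 α 1 (-τ) / τ ^ (2 / α)) atTop
      (𝓝 (2 * ∫ v in Ioi 0, hyp2F1Integrand α 1 v)) := by
  have hα0 : 0 < α := by linarith
  have hcut : Tendsto (fun τ : ℝ => τ ^ (-α⁻¹)) atTop (𝓝[>] 0) :=
    tendsto_nhdsWithin_iff.2 ⟨tendsto_rpow_neg_atTop (inv_pos.2 hα0),
      (eventually_gt_atTop 0).mono fun τ hτ => rpow_pos_of_pos hτ _⟩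
  have hlim := (tendsto_rpow_neg_atTop (div_pos two_pos hα0)).add
    (((tendsto_setIntegral_Ioi_nhdsGT (integrableOn_hyp2F1Integrand hα zero_le_one)).comp
      hcut).const_mul 2)
  rw [zero_add] at hlim
  refine hlim.congr' ((eventually_gt_atTop 0).mono fun τ hτ => ?_)
  dsimp only
  have := rpow_pos_of_pos hτ (2 / α)
  rw [Function.comp_apply, hyp2F1_one_neg_eq α hτ.le, integral_hyp2F1Integrand_eq hα0.ne' hτ,
    rpow_neg hτ.le]
  field_simp

end hyp2F1Integrand

/-- For `α > 2`, the map `τ ↦ ₂F₁(−2/α, 1; 1 − 2/α; −τ)` is strictly increasing on `[0,∞)`,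
equals `1` at `τ = 0`, and grows like `C τ^(2/α)` as `τ → ∞` for some `C > 0`; consequently
`Q(τ) = 1/₂F₁(−2/α,1;1−2/α;−τ)` is strictly decreasing on `[0,∞)`, with `Q(0) = 1` and
`Q(τ) → 0` as `τ → ∞`. -/
theorem hyp2F1_monotone_and_asymptotics (α : ℝ) (hα : 2 < α) :
    StrictMonoOn (fun τ : ℝ => hyp2F1 α 1 (-τ)) (Ici 0) ∧
    hyp2F1 α 1 (-(0 : ℝ)) = 1 ∧
    (∃ C : ℝ, 0 < C ∧
      Tendsto (fun τ : ℝ => hyp2F1 α 1 (-τ) / τ ^ (2 / α)) atTop (𝓝 C)) ∧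
    StrictAntiOn (fun τ : ℝ => 1 / hyp2F1 α 1 (-τ)) (Ici 0) ∧
    1 / hyp2F1 α 1 (-(0 : ℝ)) = 1 ∧
    Tendsto (fun τ : ℝ => 1 / hyp2F1 α 1 (-τ)) atTop (𝓝 0) := by
  have hmono := strictMonoOn_hyp2F1_one_neg hα
  have hzero := hyp2F1_one_neg_zero α
  have hC := mul_pos two_pos (integral_hyp2F1Integrand_one_pos hα)
  have hlim := tendsto_hyp2F1_one_neg_div_rpow hα
  have hpos (τ : ℝ) (hτ : τ ∈ Ici 0) : 0 < hyp2F1 α 1 (-τ) :=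
    calc 0 < hyp2F1 α 1 (-(0 : ℝ)) := one_pos.trans_eq hzero.symm
      _ ≤ hyp2F1 α 1 (-τ) := hmono.monotoneOn self_mem_Ici hτ hτ
  have htop : Tendsto (fun τ : ℝ => hyp2F1 α 1 (-τ)) atTop atTop :=
    (hlim.pos_mul_atTop hC (tendsto_rpow_atTop (by positivity))).congr'
      ((eventually_gt_atTop 0).mono fun τ hτ => div_mul_cancel₀ _ (rpow_pos_of_pos hτ _).ne')
  refine ⟨hmono, hzero, ⟨_, hC, hlim⟩,
    fun a ha b hb hab => one_div_lt_one_div_of_lt (hpos a ha) (hmono ha hb hab),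
    by rw [hzero, div_one], ?_⟩
  simp_rw [one_div]
  exact htop.inv_tendsto_atTop
end
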